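/- arXiv:2106.15012 — 3 statements merged into one kernel-verified Lean document; each statement's English description precedes it below -/
import Mathlib

section
/- Fix integers N ≥ 1 and K ≥ 1. For a Young diagram μ with r = |μ| cells, define the conformal dimension h_{N,K}(μ) = (κ(μ) + rN − r²/N) / (2(N+K)) ∈ ℝ, where κ(μ) = 2·∑_{(i,j)∈μ}(j−i). Then the conformal dimensions of level-rank dual primaries satisfy h_{N,K}(μ) + h_{K,N}(μᵀ) = (r/2)·(1 − r/(NK)). -/
/-- Twice the content sum of a Young diagram, as a real number. -/
noncomputable def kappa (μ : YoungDiagram) : ℝ :=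
  2 * ∑ c ∈ μ.cells, ((c.2 : ℝ) - (c.1 : ℝ))

/-- The conformal dimension of the `SU(N)_K` primary labeled by the Young diagram `μ`:
`h_{N,K}(μ) = (κ(μ) + r N − r²/N) / (2(N+K))` where `r = |μ|`. -/
noncomputable def confDim (N K : ℕ) (μ : YoungDiagram) : ℝ :=
  (kappa μ + (μ.cells.card : ℝ) * N - (μ.cells.card : ℝ) ^ 2 / N) / (2 * (N + K))

lemma card_transpose (μ : YoungDiagram) : μ.transpose.cells.card = μ.cells.card := by
  simp [YoungDiagram.transpose]

lemma kappa_transpose (μ : YoungDiagram) : kappa μ.transpose = -kappa μ := by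
  simp only [kappa, YoungDiagram.transpose, Equiv.finsetCongr_apply, Finset.sum_map,
    Equiv.coe_toEmbedding, Equiv.prodComm_apply, Prod.snd_swap, Prod.fst_swap]
  rw [← mul_neg, ← Finset.sum_neg_distrib]
  exact congrArg (2 * ·) (Finset.sum_congr rfl (fun c _ => by ring))

/-- Level-rank duality of conformal dimensions:
`h_{N,K}(μ) + h_{K,N}(μᵀ) = (r/2)(1 − r/(NK))`. -/
theorem confDim_add_confDim_transpose (N K : ℕ) (hN : 1 ≤ N) (hK : 1 ≤ K)
    (μ : YoungDiagram) :
    confDim N K μ + confDim K N μ.transpose =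
      ((μ.cells.card : ℝ) / 2) * (1 - (μ.cells.card : ℝ) / (N * K)) := by
  have hN' : (N : ℝ) ≠ 0 := Nat.cast_ne_zero.mpr (by omega)
  have hK' : (K : ℝ) ≠ 0 := Nat.cast_ne_zero.mpr (by omega)
  have hNK : (N : ℝ) + K ≠ 0 := by positivity
  rw [confDim, confDim, card_transpose, kappa_transpose]
  field_simp
  ring
end

section
/- Fix integers N ≥ 1 and K ≥ 1. For every Young diagram μ, ∏_{(i,j)∈μ} sin(π(N + j − i)/(N+K)) = ∏_{(i,j)∈μᵀ} sin(π(K + j − i)/(N+K)), where μᵀ is the transpose of μ. -/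
open Real

/-- Level-rank duality of the numerator of the quantum dimension:
`∏_{(i,j)∈μ} sin(π(N+j−i)/(N+K)) = ∏_{(i,j)∈μᵀ} sin(π(K+j−i)/(N+K))`. -/
theorem sin_content_prod_transpose (N K : ℕ) (hN : 1 ≤ N) (hK : 1 ≤ K)
    (μ : YoungDiagram) :
    ∏ c ∈ μ.cells, Real.sin (π * ((N : ℝ) + c.2 - c.1) / (N + K)) =
      ∏ c ∈ μ.transpose.cells, Real.sin (π * ((K : ℝ) + c.2 - c.1) / (N + K)) := by
  have hNK : ((N : ℝ) + K) ≠ 0 := by positivity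
  refine Finset.prod_nbij' (fun c => (c.2, c.1)) (fun c => (c.2, c.1)) ?_ ?_ ?_ ?_ ?_
  · intro c hc
    simpa [YoungDiagram.mem_transpose] using hc
  · intro c hc
    rw [YoungDiagram.mem_cells] at hc ⊢
    rw [YoungDiagram.mem_transpose] at hc
    exact hc
  · intro c _; rfl
  · intro c _; rfl
  · intro c hc
    have : π * ((K : ℝ) + c.1 - c.2) / (N + K) = π - π * ((N : ℝ) + c.2 - c.1) / (N + K) := by
      field_simp
      ring
    rw [this, Real.sin_pi_sub]
end

section
/- Fix integers N ≥ 1 and K ≥ 1 and for a Young diagram μ define the quantum dimension dim_q^{N,K}(μ) = ∏_{(i,j)∈μ} sin(π(N + j − i)/(N+K)) / sin(π·h_μ(i,j)/(N+K)), where h_μ(i,j) = (rowLen_μ(i) − j) + (colLen_μ(j) − i) − 1 is the hook length. Then for every Young diagram μ whose hook lengths are all strictly less than N+K, one has dim_q^{N,K}(μ) = dim_q^{K,N}(μᵀ), where μᵀ is the transpose of μ. -/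
open Real

/-- The hook length of the cell `(i,j)` of the Young diagram `μ`. -/
def hookLen (μ : YoungDiagram) (c : ℕ × ℕ) : ℕ :=
  (μ.rowLen c.1 - c.2) + (μ.colLen c.2 - c.1) - 1

/-- The quantum dimension (unknot invariant) of the `SU(N)_K` primary labeled by `μ`,
via the quantum hook-content formula at `q = exp(2πi/(N+K))`. -/
noncomputable def qDim (N K : ℕ) (μ : YoungDiagram) : ℝ :=
  ∏ c ∈ μ.cells,
    Real.sin (π * ((N : ℝ) + c.2 - c.1) / (N + K)) /
      Real.sin (π * (hookLen μ c : ℝ) / (N + K))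

lemma hookLen_transpose (μ : YoungDiagram) (c : ℕ × ℕ) :
    hookLen μ.transpose c.swap = hookLen μ c := by
  simp [hookLen, YoungDiagram.rowLen_transpose, YoungDiagram.colLen_transpose, Nat.add_comm]

/-- Level-rank duality of unknot invariants: if all hook lengths of `μ` are less
than `N+K`, then `dim_q^{N,K}(μ) = dim_q^{K,N}(μᵀ)`. -/
theorem qDim_transpose (N K : ℕ) (hN : 1 ≤ N) (hK : 1 ≤ K) (μ : YoungDiagram)
    (hhook : ∀ c ∈ μ.cells, hookLen μ c < N + K) :
    qDim N K μ = qDim K N μ.transpose := by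
  unfold qDim
  refine Finset.prod_nbij' (fun c => c.swap) (fun c => c.swap) ?_ ?_ ?_ ?_ ?_
  · intro c hc
    simpa [YoungDiagram.mem_cells, YoungDiagram.mem_transpose] using hc
  · intro c hc
    simpa [YoungDiagram.mem_cells, YoungDiagram.mem_transpose] using hc
  · intro c _; simp
  · intro c _; simp
  · intro c _
    have hNK : ((N : ℝ) + K) ≠ 0 := by positivity
    rw [hookLen_transpose]
    congr 1
    have harg : π * ((K : ℝ) + (c.swap).2 - (c.swap).1) / (K + N)
        = π - π * ((N : ℝ) + c.2 - c.1) / (N + K) := by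
      field_simp
      simp only [Prod.snd_swap, Prod.fst_swap]
      ring
    rw [harg, Real.sin_pi_sub]
    ring_nf
end
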